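/- arXiv:math/0504378 — 2 statements merged into one kernel-verified Lean document; each statement's English description precedes it below -/
import Mathlib

section
/- Suppose every edge probability satisfies p_e ≤ p̄ for some p̄ with E_T · p̄ < 1. Then for any character χ, f̃_χ = Σ_{χ̂ ∈ H(χ)} Π_{e∈E(T)} p_e^{1{χ̂ flips e}} (1−p_e)^{1{χ̂ does not flip e}} ≤ E_T · (E_T · p̄)^{l(χ,T)}. -/
open Finset

variable {V : Type} [Fintype V] [DecidableEq V]

/-- The set of edges flipped by an assignment `f` of states to vertices. -/
def flips (G : SimpleGraph V) [DecidableRel G.Adj] (f : V → Bool) : Finset (Sym2 V) :=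
  G.edgeFinset.filter (fun e =>
    Sym2.lift ⟨fun u v => f u != f v, fun u v => by cases hu : f u <;> cases hv : f v <;> simp [hu, hv]⟩ e = true)

/-- `ch`: the number of flipped edges. -/
def ch (G : SimpleGraph V) [DecidableRel G.Adj] (f : V → Bool) : ℕ := (flips G f).card

/-- Extensions of a character (given on `leaves`) to all vertices. -/
def exts (leaves : Finset V) (χ : V → Bool) : Finset (V → Bool) :=
  Finset.univ.filter (fun f => ∀ v ∈ leaves, f v = χ v)

/-- Parsimony score of a character. -/
noncomputable def pars (G : SimpleGraph V) [DecidableRel G.Adj] (leaves : Finset V) (χ : V → Bool) : ℕ :=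
  sInf {m | ∃ f ∈ exts leaves χ, ch G f = m}

/-- `f̃_χ(q)` with a common transition probability `q` on every edge. -/
noncomputable def ftilde (G : SimpleGraph V) [DecidableRel G.Adj] (leaves : Finset V)
    (χ : V → Bool) (q : ℝ) : ℝ :=
  ∑ f ∈ exts leaves χ, q ^ ch G f * (1 - q) ^ (G.edgeFinset.card - ch G f)

/-- Weight of a full assignment under edge probabilities `p`. -/
noncomputable def wt (G : SimpleGraph V) [DecidableRel G.Adj] (p : Sym2 V → ℝ)
    (f : V → Bool) : ℝ :=
  ∏ e ∈ G.edgeFinset, if e ∈ flips G f then p e else 1 - p e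

/-- `f̃_χ(p)` with general edge probabilities. -/
noncomputable def ftildeP (G : SimpleGraph V) [DecidableRel G.Adj] (leaves : Finset V)
    (χ : V → Bool) (p : Sym2 V → ℝ) : ℝ :=
  ∑ f ∈ exts leaves χ, wt G p f

/-- Probability of a set of full assignments in the Cavender–Farris model. -/
noncomputable def probEvent (G : SimpleGraph V) [DecidableRel G.Adj] (p : Sym2 V → ℝ)
    (A : Finset (V → Bool)) : ℝ :=
  (1 / 2) * ∑ f ∈ A, wt G p f

private lemma mem_flips_iff (G : SimpleGraph V) [DecidableRel G.Adj] (f : V → Bool)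
    {u v : V} (h : G.Adj u v) : s(u, v) ∈ flips G f ↔ f u ≠ f v := by
  simp [flips, SimpleGraph.mem_edgeFinset, h]

private lemma eq_of_flips_eq (G : SimpleGraph V) [DecidableRel G.Adj] (hc : G.Connected)
    {f g : V → Bool} (h : flips G f = flips G g) {v₀ : V} (h0 : f v₀ = g v₀) : f = g := by
  have key : ∀ {a b : V} (_ : G.Walk a b), f a = g a → f b = g b := by
    intro a b w
    induction w with
    | nil => exact id
    | cons hadj _ ih =>
      intro hab
      apply ih
      rename_i a c b _
      have h1 : (s(a, c) ∈ flips G f) ↔ (s(a, c) ∈ flips G g) := by rw [h]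
      rw [mem_flips_iff G f hadj, mem_flips_iff G g hadj] at h1
      cases hfa : f a <;> cases hfc : f c <;> cases hga : g a <;> cases hgc : g c <;>
        simp_all
  funext v
  obtain ⟨w⟩ := hc v₀ v
  exact key w h0

/-- if every edge probability is at most `p̄` with `E_T·p̄ < 1`, then
`f̃_χ ≤ E_T · (E_T · p̄)^{l(χ,T)}`. -/
theorem ftilde_upper_bound (G : SimpleGraph V) [DecidableRel G.Adj] (hT : G.IsTree)
    (leaves : Finset V) (hne : leaves.Nonempty) (χ : V → Bool)
    (p : Sym2 V → ℝ) (pbar : ℝ) (hp0 : ∀ e ∈ G.edgeFinset, 0 ≤ p e)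
    (hp : ∀ e ∈ G.edgeFinset, p e ≤ pbar) (hpbar0 : 0 ≤ pbar)
    (hE1 : 1 ≤ G.edgeFinset.card)
    (hEp : (G.edgeFinset.card : ℝ) * pbar < 1) :
    ftildeP G leaves χ p
      ≤ (G.edgeFinset.card : ℝ) * ((G.edgeFinset.card : ℝ) * pbar) ^ pars G leaves χ := by
  classical
  set E := G.edgeFinset with hEdef
  set n := E.card with hndef
  set l := pars G leaves χ with hldef
  have hn1 : (1 : ℝ) ≤ (n : ℝ) := by exact_mod_cast hE1
  have hpbar1 : pbar < 1 := by
    nlinarith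
  -- weight of an edge subset
  set W : Finset (Sym2 V) → ℝ := fun S => ∏ e ∈ E, if e ∈ S then p e else 1 - p e with hWdef
  have hWnn : ∀ S, 0 ≤ W S := by
    intro S
    apply Finset.prod_nonneg
    intro e he
    by_cases h : e ∈ S
    · simpa [h] using hp0 e he
    · have := hp e he
      simp only [h, if_false]
      linarith
  have hwt : ∀ f, wt G p f = W (flips G f) := fun f => rfl
  -- parsimony lower bound for each extension
  have hch : ∀ f ∈ exts leaves χ, l ≤ ch G f := by
    intro f hf
    exact Nat.sInf_le ⟨f, hf, rfl⟩
  -- flips is injective on extensions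
  obtain ⟨v₀, hv₀⟩ := hne
  have hinj : ∀ f ∈ exts leaves χ, ∀ g ∈ exts leaves χ,
      flips G f = flips G g → f = g := by
    intro f hf g hg hfg
    have hf' := (Finset.mem_filter.1 hf).2 v₀ hv₀
    have hg' := (Finset.mem_filter.1 hg).2 v₀ hv₀
    exact eq_of_flips_eq G hT.isConnected hfg (hf'.trans hg'.symm)
  -- the candidate family
  set 𝒮 : Finset (Finset (Sym2 V)) := E.powerset.filter (fun S => l ≤ S.card) with h𝒮def
  have himg : (exts leaves χ).image (flips G) ⊆ 𝒮 := by
    intro S hS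
    obtain ⟨f, hf, rfl⟩ := Finset.mem_image.1 hS
    refine Finset.mem_filter.2 ⟨Finset.mem_powerset.2 (Finset.filter_subset _ _), hch f hf⟩
  have step1 : ftildeP G leaves χ p ≤ ∑ S ∈ 𝒮, W S := by
    calc ftildeP G leaves χ p = ∑ S ∈ (exts leaves χ).image (flips G), W S := by
          rw [Finset.sum_image hinj]; rfl
      _ ≤ ∑ S ∈ 𝒮, W S :=
          Finset.sum_le_sum_of_subset_of_nonneg himg (fun S _ _ => hWnn S)
  -- covering by size-l subsets
  have step2 : ∑ S ∈ 𝒮, W S ≤ ∑ T ∈ E.powersetCard l, ∑ S ∈ 𝒮, (if T ⊆ S then W S else 0) := by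
    rw [Finset.sum_comm]
    apply Finset.sum_le_sum
    intro S hS
    obtain ⟨hSE, hlS⟩ := Finset.mem_filter.1 hS
    obtain ⟨T₀, hT₀S, hT₀card⟩ := Finset.exists_subset_card_eq hlS
    have hT₀ : T₀ ∈ E.powersetCard l :=
      Finset.mem_powersetCard.2 ⟨hT₀S.trans (Finset.mem_powerset.1 hSE), hT₀card⟩
    have := Finset.single_le_sum (f := fun T => if T ⊆ S then W S else 0)
      (by intro T _; by_cases h : T ⊆ S <;> simp [h, hWnn S]) hT₀
    simpa [hT₀S] using this
  -- bound the inner sum for each T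
  have step3 : ∀ T ∈ E.powersetCard l, ∑ S ∈ 𝒮, (if T ⊆ S then W S else 0) ≤ pbar ^ l := by
    intro T hT
    obtain ⟨hTE, hTcard⟩ := Finset.mem_powersetCard.1 hT
    set W' : Finset (Sym2 V) → ℝ := fun S' => ∏ e ∈ E \ T, if e ∈ S' then p e else 1 - p e
      with hW'def
    have hW'nn : ∀ S', 0 ≤ W' S' := by
      intro S'
      apply Finset.prod_nonneg
      intro e he
      have he' := (Finset.mem_sdiff.1 he).1
      by_cases h : e ∈ S'
      · simpa [h] using hp0 e he'
      · have := hp e he'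
        simp only [h, if_false]
        linarith
    have hpT0 : 0 ≤ ∏ e ∈ T, p e := Finset.prod_nonneg (fun e he => hp0 e (hTE he))
    -- split each W S
    have hsplit : ∀ S, T ⊆ S → W S = (∏ e ∈ T, p e) * W' (S \ T) := by
      intro S hTS
      have hunion : E = T ∪ (E \ T) := by
        rw [Finset.union_sdiff_of_subset hTE]
      rw [hWdef]
      simp only
      rw [hunion, Finset.prod_union (Finset.disjoint_sdiff)]
      congr 1
      · apply Finset.prod_congr rfl
        intro e he
        simp [hTS he]
      · apply Finset.prod_congr rfl
        intro e he
        have heT : e ∉ T := (Finset.mem_sdiff.1 he).2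
        by_cases h : e ∈ S
        · simp [h, Finset.mem_sdiff, heT]
        · simp [h, Finset.mem_sdiff]
    -- total mass of W' over all subsets of E \ T is 1
    have htotal : ∑ S' ∈ (E \ T).powerset, W' S' = 1 := by
      have hprodadd := Finset.prod_add (fun e => p e) (fun e => 1 - p e) (E \ T)
      have h1 : ∏ e ∈ E \ T, (p e + (1 - p e)) = 1 := by
        rw [Finset.prod_congr rfl (fun e _ => by ring : ∀ e ∈ E \ T, p e + (1 - p e) = (1:ℝ))]
        simp
      rw [← h1, hprodadd]
      apply Finset.sum_congr rfl
      intro S' hS'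
      have hS'sub := Finset.mem_powerset.1 hS'
      rw [hW'def]
      simp only
      have hunion : E \ T = S' ∪ ((E \ T) \ S') := by
        rw [Finset.union_sdiff_of_subset hS'sub]
      conv_lhs => rw [hunion]
      rw [Finset.prod_union (Finset.disjoint_sdiff)]
      congr 1
      · exact Finset.prod_congr rfl (fun e he => by simp [he])
      · exact Finset.prod_congr rfl (fun e he => by simp [(Finset.mem_sdiff.1 he).2])
    -- now the chain
    have hfib : ∑ S ∈ 𝒮, (if T ⊆ S then W S else 0) = ∑ S ∈ 𝒮.filter (fun S => T ⊆ S), W S :=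
      (Finset.sum_filter _ _).symm
    rw [hfib]
    have hmap : ∑ S ∈ 𝒮.filter (fun S => T ⊆ S), W S
        = (∏ e ∈ T, p e) * ∑ S ∈ 𝒮.filter (fun S => T ⊆ S), W' (S \ T) := by
      rw [Finset.mul_sum]
      apply Finset.sum_congr rfl
      intro S hS
      exact hsplit S (Finset.mem_filter.1 hS).2
    rw [hmap]
    have hsum1 : ∑ S ∈ 𝒮.filter (fun S => T ⊆ S), W' (S \ T) ≤ 1 := by
      rw [← htotal]
      have hinj2 : ∀ S₁ ∈ 𝒮.filter (fun S => T ⊆ S), ∀ S₂ ∈ 𝒮.filter (fun S => T ⊆ S),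
          S₁ \ T = S₂ \ T → S₁ = S₂ := by
        intro S₁ h₁ S₂ h₂ he
        have h₁T := (Finset.mem_filter.1 h₁).2
        have h₂T := (Finset.mem_filter.1 h₂).2
        rw [← Finset.sdiff_union_of_subset h₁T, ← Finset.sdiff_union_of_subset h₂T, he]
      calc ∑ S ∈ 𝒮.filter (fun S => T ⊆ S), W' (S \ T)
          = ∑ S' ∈ (𝒮.filter (fun S => T ⊆ S)).image (· \ T), W' S' := by
            rw [Finset.sum_image hinj2]
        _ ≤ ∑ S' ∈ (E \ T).powerset, W' S' := by
            apply Finset.sum_le_sum_of_subset_of_nonneg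
            · intro S' hS'
              obtain ⟨S, hS, rfl⟩ := Finset.mem_image.1 hS'
              have hSE : S ⊆ E := Finset.mem_powerset.1 (Finset.mem_filter.1
                ((Finset.mem_filter.1 hS).1)).1
              exact Finset.mem_powerset.2 (fun e he =>
                Finset.mem_sdiff.2 ⟨hSE (Finset.mem_sdiff.1 he).1, (Finset.mem_sdiff.1 he).2⟩)
            · intro S' _ _; exact hW'nn S'
    have hpTbound : ∏ e ∈ T, p e ≤ pbar ^ l := by
      rw [← hTcard, ← Finset.prod_const]
      exact Finset.prod_le_prod (fun e he => hp0 e (hTE he)) (fun e he => hp e (hTE he))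
    calc (∏ e ∈ T, p e) * ∑ S ∈ 𝒮.filter (fun S => T ⊆ S), W' (S \ T)
        ≤ (∏ e ∈ T, p e) * 1 := by
          apply mul_le_mul_of_nonneg_left hsum1 hpT0
      _ = ∏ e ∈ T, p e := mul_one _
      _ ≤ pbar ^ l := hpTbound
  have step4 : ∑ T ∈ E.powersetCard l, (pbar ^ l) = (n.choose l : ℝ) * pbar ^ l := by
    rw [Finset.sum_const, Finset.card_powersetCard, nsmul_eq_mul]
  have hfinal : ftildeP G leaves χ p ≤ (n.choose l : ℝ) * pbar ^ l := by
    calc ftildeP G leaves χ p ≤ ∑ S ∈ 𝒮, W S := step1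
      _ ≤ ∑ T ∈ E.powersetCard l, ∑ S ∈ 𝒮, (if T ⊆ S then W S else 0) := step2
      _ ≤ ∑ T ∈ E.powersetCard l, (pbar ^ l) := Finset.sum_le_sum step3
      _ = (n.choose l : ℝ) * pbar ^ l := step4
  -- finish arithmetic
  have hchoose : (n.choose l : ℝ) ≤ (n : ℝ) ^ l := by
    exact_mod_cast Nat.choose_le_pow n l
  have hpl : (0:ℝ) ≤ pbar ^ l := pow_nonneg hpbar0 l
  calc ftildeP G leaves χ p ≤ (n.choose l : ℝ) * pbar ^ l := hfinal
    _ ≤ (n : ℝ) ^ l * pbar ^ l := mul_le_mul_of_nonneg_right hchoose hpl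
    _ ≤ (n : ℝ) * ((n : ℝ) ^ l * pbar ^ l) :=
        le_mul_of_one_le_left (mul_nonneg (pow_nonneg (by linarith) l) hpl) hn1
    _ = (n : ℝ) * ((n : ℝ) * pbar) ^ l := by rw [mul_pow]
end

section
/- For a tree T with a single edge probability q = l(X,T)/(E_T(k+N_c)) on every edge and X a set of k characters, ln P̃[X_0 | q, T] ≥ (k+N_c)·E_T·ln(1−q) + l(X,T)·ln q, where X_0 is X with N_c constant all-0 characters appended. -/
open Finset

variable {V : Type} [Fintype V] [DecidableEq V]

lemma exts_nonempty (leaves : Finset V) (χ : V → Bool) : (exts leaves χ).Nonempty := by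
  refine ⟨fun v => if v ∈ leaves then χ v else false, ?_⟩
  simp only [exts, mem_filter, mem_univ, true_and]
  intro v hv; simp [hv]

lemma ch_le (G : SimpleGraph V) [DecidableRel G.Adj] (f : V → Bool) :
    ch G f ≤ G.edgeFinset.card :=
  Finset.card_le_card (Finset.filter_subset _ _)

lemma pars_attained (G : SimpleGraph V) [DecidableRel G.Adj] (leaves : Finset V) (χ : V → Bool) :
    ∃ f ∈ exts leaves χ, ch G f = pars G leaves χ := by
  obtain ⟨f, hf⟩ := exts_nonempty leaves χ
  have : pars G leaves χ ∈ {m | ∃ f ∈ exts leaves χ, ch G f = m} :=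
    Nat.sInf_mem ⟨ch G f, f, hf, rfl⟩
  exact this

lemma term_nonneg (G : SimpleGraph V) [DecidableRel G.Adj] {q : ℝ} (hq0 : 0 ≤ q) (hq1 : q ≤ 1)
    (f : V → Bool) : 0 ≤ q ^ ch G f * (1 - q) ^ (G.edgeFinset.card - ch G f) := by
  have : (0:ℝ) ≤ 1 - q := by linarith
  positivity

lemma ftilde_ge (G : SimpleGraph V) [DecidableRel G.Adj] (leaves : Finset V)
    (χ : V → Bool) {q : ℝ} (hq0 : 0 ≤ q) (hq1 : q ≤ 1) :
    q ^ pars G leaves χ * (1 - q) ^ G.edgeFinset.card ≤ ftilde G leaves χ q := by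
  obtain ⟨f, hf, hch⟩ := pars_attained G leaves χ
  have h1q : (0:ℝ) ≤ 1 - q := by linarith
  have h1 : q ^ pars G leaves χ * (1 - q) ^ G.edgeFinset.card
      ≤ q ^ ch G f * (1 - q) ^ (G.edgeFinset.card - ch G f) := by
    rw [← hch]
    exact mul_le_mul_of_nonneg_left
      (pow_le_pow_of_le_one h1q (by linarith) (Nat.sub_le _ _)) (by positivity)
  exact h1.trans (Finset.single_le_sum (fun g _ => term_nonneg G hq0 hq1 g) hf)

lemma ftilde_zero_ge (G : SimpleGraph V) [DecidableRel G.Adj] (leaves : Finset V)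
    {q : ℝ} (hq0 : 0 ≤ q) (hq1 : q ≤ 1) :
    (1 - q) ^ G.edgeFinset.card ≤ ftilde G leaves (fun _ => false) q := by
  have hmem : (fun _ : V => false) ∈ exts leaves (fun _ => false) := by
    simp [exts]
  have hch : ch G (fun _ : V => false) = 0 := by
    unfold ch flips
    rw [Finset.card_eq_zero, Finset.filter_eq_empty_iff]
    intro e _
    induction e using Sym2.ind with
    | _ u v => simp
  have := Finset.single_le_sum (fun g _ => term_nonneg G hq0 hq1 g) hmem
  rw [hch, pow_zero, one_mul, Nat.sub_zero] at this
  exact this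

/-- with the common edge probability `q = l(X,T)/(E_T(k+N_c))`,
`ln P̃[X₀ | q, T] ≥ (k+N_c)·E_T·ln(1−q) + l(X,T)·ln q`, where `X₀` is `X` augmented
with `N_c` constant all-0 characters. -/
theorem logPtilde_lower_bound (G : SimpleGraph V) [DecidableRel G.Adj] (hT : G.IsTree)
    (leaves : Finset V) (k : ℕ) (X : Fin k → (V → Bool)) (Nc : ℕ)
    (hE : 1 ≤ G.edgeFinset.card)
    (L : ℕ) (hLdef : L = ∑ i, pars G leaves (X i)) (hL : 1 ≤ L)
    (q : ℝ) (hq : q = (L : ℝ) / ((G.edgeFinset.card : ℝ) * ((k : ℝ) + Nc)))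
    (hq2 : q ≤ 1 / 2) :
    Real.log ((∏ i, ftilde G leaves (X i) q)
          * (ftilde G leaves (fun _ => false) q) ^ Nc)
      ≥ ((k : ℝ) + Nc) * (G.edgeFinset.card : ℝ) * Real.log (1 - q)
          + (L : ℝ) * Real.log q := by
  set E := G.edgeFinset.card with hEdef
  have hk : 1 ≤ k := by
    by_contra h
    interval_cases k
    simp at hLdef
    omega
  have hkNc : (0:ℝ) < (k : ℝ) + Nc := by
    have : (1:ℝ) ≤ (k:ℝ) := by exact_mod_cast hk
    positivity
  have hq0 : 0 < q := by
    rw [hq]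
    apply div_pos
    · exact_mod_cast hL
    · apply mul_pos _ hkNc
      exact_mod_cast hE
  have hq1 : q ≤ 1 := by linarith
  have h1q : (0:ℝ) < 1 - q := by linarith
  -- lower bound on the product
  have hlow : q ^ L * (1 - q) ^ (E * (k + Nc))
      ≤ (∏ i, ftilde G leaves (X i) q) * (ftilde G leaves (fun _ => false) q) ^ Nc := by
    have h1 : ∏ i, (q ^ pars G leaves (X i) * (1 - q) ^ E)
        ≤ ∏ i, ftilde G leaves (X i) q := by
      apply Finset.prod_le_prod
      · intro i _; positivity
      · intro i _; exact ftilde_ge G leaves (X i) hq0.le hq1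
    have h2 : ((1 - q) ^ E) ^ Nc ≤ (ftilde G leaves (fun _ => false) q) ^ Nc := by
      apply pow_le_pow_left₀ (pow_nonneg h1q.le E)
      exact ftilde_zero_ge G leaves hq0.le hq1
    have h3 : ∏ i, (q ^ pars G leaves (X i) * (1 - q) ^ E)
        = q ^ L * (1 - q) ^ (E * k) := by
      rw [Finset.prod_mul_distrib, Finset.prod_pow_eq_pow_sum, ← hLdef,
        Finset.prod_const, Finset.card_univ, Fintype.card_fin, ← pow_mul]
    calc q ^ L * (1 - q) ^ (E * (k + Nc))
        = (q ^ L * (1 - q) ^ (E * k)) * ((1 - q) ^ E) ^ Nc := by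
          rw [← pow_mul, mul_assoc, ← pow_add, ← Nat.mul_add]
      _ ≤ (∏ i, ftilde G leaves (X i) q) * (ftilde G leaves (fun _ => false) q) ^ Nc := by
          rw [← h3]
          apply mul_le_mul h1 h2 (pow_nonneg (pow_nonneg h1q.le E) Nc)
          exact Finset.prod_nonneg (fun i _ => le_trans (mul_nonneg (pow_nonneg hq0.le _) (pow_nonneg h1q.le _)) (ftilde_ge G leaves (X i) hq0.le hq1))
  have hpos : (0:ℝ) < q ^ L * (1 - q) ^ (E * (k + Nc)) :=
    mul_pos (pow_pos hq0 L) (pow_pos h1q _)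
  have hlog := Real.log_le_log hpos hlow
  rw [Real.log_mul (pow_pos hq0 L).ne' (pow_pos h1q _).ne', Real.log_pow, Real.log_pow] at hlog
  refine le_trans ?_ hlog
  push_cast
  ring_nf
  rfl
end
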